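/- There exists an ancestry labeling scheme for the family F(n,d) of rooted forests with at most n nodes and depth at most d, with label size log₂ n + 2·log₂ d + O(1): there is a set U of size O(n·d²) and a decoder D such that every forest F ∈ F(n,d) admits a labeling L : V(F) → U with D(L(u),L(v)) = 1 iff u is a strict ancestor of v. -/

import Mathlib

/-- A rooted forest on a finite vertex type `V`: each vertex has an optional
parent, and the depth of a root is `1` while the depth of a child is one more
than the depth of its parent (in particular the parent relation is acyclic). -/
structure RootedForest (V : Type) [Fintype V] where
  parent : V → Option V
  depth : V → ℕ
  depth_root : ∀ v, parent v = none → depth v = 1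
  depth_parent : ∀ v u, parent v = some u → depth v = depth u + 1

/-- `u` is a (strict) ancestor of `v`: `u` lies on the path from `v` to its root. -/
def RootedForest.Ancestor {V : Type} [Fintype V] (F : RootedForest V) (u v : V) : Prop :=
  Relation.TransGen (fun a b => F.parent a = some b) v u

/-!
Vertices are placed at distinct positions in depth-first order, each vertex `v` receiving an
interval that begins at its own position and contains exactly the positions of its descendants;
then `u` is a strict ancestor of `w` iff the position of `w` lies in the interval of `u` after
its start. An interval is stored as its start `l` and a class `a ≤ 4d`, its length being
`a * 2 ^ ν₂(l)`: a required length `m ≥ 2d` is rounded up to `a * 2 ^ b` and the start is pushed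
to an odd multiple of `2 ^ b`, which costs a factor `1 + 2/d` per level. Reserving `2d`
positions per vertex, a forest of depth `d` on `n` vertices thus fits into
`2dn(1 + 2/d)^d ≤ 18dn` positions, and the pairs `(l, a)` into `O(nd²)` numbers.
-/

open Finset Relation

namespace RootedForest

variable {V : Type} [Fintype V] (F : RootedForest V)

theorem depth_lt_of_ancestor {u v : V} (h : F.Ancestor u v) : F.depth u < F.depth v := by
  induction h with
  | single h => have := F.depth_parent _ _ h; omega
  | tail _ h _ => have := F.depth_parent _ _ h; omega

theorem ancestor_irrefl (v : V) : ¬ F.Ancestor v v :=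
  fun h => (F.depth_lt_of_ancestor h).false

theorem ancestor_of_parent_eq {c v : V} (h : F.parent c = some v) : F.Ancestor v c :=
  TransGen.single h

open Classical in
noncomputable def descendants (v : V) : Finset V := {w | F.Ancestor v w}

open Classical in
noncomputable def subtree (v : V) : Finset V := insert v (F.descendants v)

open Classical in
noncomputable def children (v : V) : Finset V := {c | F.parent c = some v}

open Classical in
noncomputable def roots : Finset V := {r | F.parent r = none}

variable {F}

@[simp] theorem mem_descendants {v w : V} : w ∈ F.descendants v ↔ F.Ancestor v w := by
  simp [descendants]

@[simp] theorem mem_subtree {v w : V} : w ∈ F.subtree v ↔ w = v ∨ F.Ancestor v w := by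
  simp [subtree]

@[simp] theorem mem_children {c v : V} : c ∈ F.children v ↔ F.parent c = some v := by
  simp [children]

@[simp] theorem mem_roots {r : V} : r ∈ F.roots ↔ F.parent r = none := by
  simp [roots]

theorem mem_subtree_iff_reflTransGen {v w : V} :
    w ∈ F.subtree v ↔ ReflTransGen (fun a b => F.parent a = some b) w v := by
  rw [mem_subtree, reflTransGen_iff_eq_or_transGen, eq_comm]; rfl

theorem subtree_subset_of_mem {u v : V} (h : u ∈ F.subtree v) : F.subtree u ⊆ F.subtree v :=
  fun _ hw => mem_subtree_iff_reflTransGen.2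
    ((mem_subtree_iff_reflTransGen.1 hw).trans (mem_subtree_iff_reflTransGen.1 h))

theorem depth_child {c v : V} (h : c ∈ F.children v) : F.depth c = F.depth v + 1 :=
  F.depth_parent c v (mem_children.1 h)

theorem depth_of_mem_roots {r : V} (h : r ∈ F.roots) : F.depth r = 1 :=
  F.depth_root r (mem_roots.1 h)

theorem eq_of_mem_subtree_of_depth_eq {c c' w : V} (hc : w ∈ F.subtree c)
    (hc' : w ∈ F.subtree c') (h : F.depth c = F.depth c') : c = c' := by
  rw [mem_subtree_iff_reflTransGen] at hc hc'
  revert hc'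
  induction hc using ReflTransGen.head_induction_on with
  | refl =>
    intro hc'
    rcases reflTransGen_iff_eq_or_transGen.1 hc' with rfl | hc'
    · rfl
    · exact absurd (F.depth_lt_of_ancestor hc') (by omega)
  | head hwp hpc ih =>
    intro hc'
    rcases hc'.cases_head with rfl | ⟨p', hwp', hp'c'⟩
    · exact absurd (F.depth_lt_of_ancestor (TransGen.head' hwp hpc)) (by omega)
    · exact ih (Option.some_injective _ (hwp'.symm.trans hwp) ▸ hp'c')

theorem disjoint_subtree {c c' : V} (hne : c ≠ c') (h : F.depth c = F.depth c') :
    Disjoint (F.subtree c) (F.subtree c') :=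
  disjoint_left.2 fun _ hw hw' => hne (eq_of_mem_subtree_of_depth_eq hw hw' h)

theorem not_ancestor_of_mem_subtree {c c' u w : V} (hne : c ≠ c')
    (h : F.depth c = F.depth c') (hu : u ∈ F.subtree c) (hw : w ∈ F.subtree c') :
    ¬ F.Ancestor u w :=
  fun huw => hne (eq_of_mem_subtree_of_depth_eq
    (subtree_subset_of_mem hu (mem_subtree.2 (Or.inr huw))) hw h)

theorem descendants_eq_biUnion_children [DecidableEq V] (v : V) :
    F.descendants v = (F.children v).biUnion F.subtree := by
  ext w
  simp only [mem_descendants, mem_biUnion, mem_children, mem_subtree_iff_reflTransGen]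
  exact TransGen.tail'_iff.trans
    ⟨fun ⟨c, hwc, hc⟩ => ⟨c, hc, hwc⟩, fun ⟨c, hc, hwc⟩ => ⟨c, hwc, hc⟩⟩

theorem card_subtree (v : V) : #(F.subtree v) = #(F.descendants v) + 1 := by
  classical
  exact card_insert_of_notMem (by simpa using F.ancestor_irrefl v)

theorem exists_mem_roots_mem_subtree (w : V) : ∃ r ∈ F.roots, w ∈ F.subtree r := by
  induction hk : F.depth w using Nat.strong_induction_on generalizing w with
  | _ k ih =>
    cases hp : F.parent w with
    | none => exact ⟨w, mem_roots.2 hp, by simp⟩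
    | some p =>
      obtain ⟨r, hr, hpr⟩ := ih (F.depth p) (by have := F.depth_parent w p hp; omega) p rfl
      exact ⟨r, hr, subtree_subset_of_mem hpr
        (mem_subtree.2 (Or.inr (F.ancestor_of_parent_eq hp)))⟩

theorem univ_eq_biUnion_roots [DecidableEq V] :
    (univ : Finset V) = F.roots.biUnion F.subtree := by
  ext w
  simpa using exists_mem_roots_mem_subtree w

end RootedForest

/-- The scale `2 ^ ν₂(l)` of the interval coded by `(l, a)` is read off its start `l`, so that a
label need only store `l` and a class `a ≤ 4d`. -/
def intervalEnd (p : ℕ × ℕ) : ℕ := p.1 + p.2 * 2 ^ padicValNat 2 p.1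

theorem padicValNat_odd_mul_two_pow (q b : ℕ) : padicValNat 2 ((2 * q + 1) * 2 ^ b) = b := by
  rw [padicValNat.mul (by omega) (by positivity), padicValNat.prime_pow,
    padicValNat.eq_zero_of_not_dvd (by omega), zero_add]

/-- The length `m ≥ 2d` is rounded up to `a * 2 ^ b` with `2d ≤ a ≤ 4d`, and the start is moved
past `x` to an odd multiple of `2 ^ b`; together this costs at most `4 * 2 ^ b ≤ 2m / d`. -/
theorem exists_interval_code {d m : ℕ} (x : ℕ) (hd : 0 < d) (hm : 2 * d ≤ m) :
    ∃ p : ℕ × ℕ, x ≤ p.1 ∧ p.2 ≤ 4 * d ∧ p.1 + m ≤ intervalEnd p ∧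
      d * intervalEnd p ≤ d * x + (d + 2) * m := by
  set b := Nat.log 2 (m / (2 * d))
  have hpos : 0 < m / (2 * d) := Nat.div_pos hm (by omega)
  have hlow : 2 ^ b * (2 * d) ≤ m :=
    (Nat.le_div_iff_mul_le (by omega)).1 (Nat.pow_log_le_self 2 hpos.ne')
  have hhigh : m < 2 ^ (b + 1) * (2 * d) :=
    (Nat.div_lt_iff_lt_mul (by omega)).1 (Nat.lt_pow_succ_log_self (by norm_num) _)
  rw [pow_succ, mul_comm _ 2] at hhigh
  refine ⟨((2 * (x / (2 * 2 ^ b) + 1) + 1) * 2 ^ b, m / 2 ^ b + 1), ?_, ?_, ?_, ?_⟩ <;>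
    simp only [intervalEnd, padicValNat_odd_mul_two_pow]
  all_goals
    have hx : x < 2 * 2 ^ b * (x / (2 * 2 ^ b) + 1) := Nat.lt_mul_div_succ x (by positivity)
    have hx' : 2 * 2 ^ b * (x / (2 * 2 ^ b)) ≤ x := Nat.mul_div_le x _
    have hm' : m < 2 ^ b * (m / 2 ^ b + 1) := Nat.lt_mul_div_succ m (by positivity)
    have hm'' : 2 ^ b * (m / 2 ^ b) ≤ m := Nat.mul_div_le m _
    generalize x / (2 * 2 ^ b) = A at *
    generalize m / 2 ^ b = B at *
    generalize 2 ^ b = t at *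
    nlinarith

def StartsInside (p q : ℕ × ℕ) : Prop := p.1 < q.1 ∧ q.1 < intervalEnd p

instance : DecidableRel StartsInside := fun _ _ => inferInstanceAs (Decidable (_ ∧ _))

section Packing

open RootedForest

variable {V : Type} [Fintype V] (F : RootedForest V) (d : ℕ)

structure IsIntervalLabeling (S : Finset V) (lab : V → ℕ × ℕ) (x y : ℕ) : Prop where
  le : x ≤ y
  le_start : ∀ w ∈ S, x ≤ (lab w).1
  start_lt : ∀ w ∈ S, (lab w).1 < y
  end_le : ∀ w ∈ S, intervalEnd (lab w) ≤ y
  class_le : ∀ w ∈ S, (lab w).2 ≤ 4 * d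
  startsInside_iff : ∀ u ∈ S, ∀ w ∈ S, StartsInside (lab u) (lab w) ↔ F.Ancestor u w

def Packable (S : Finset V) (β : ℝ) : Prop :=
  ∀ x : ℕ, ∃ lab y, IsIntervalLabeling F d S lab x y ∧ (y : ℝ) ≤ x + #S * β

variable {F d}

theorem IsIntervalLabeling.piecewise [DecidableEq V] {S T : Finset V} {lab₁ lab₂ : V → ℕ × ℕ}
    {x y z : ℕ} (h₁ : IsIntervalLabeling F d S lab₁ x y) (h₂ : IsIntervalLabeling F d T lab₂ y z)
    (hST : ∀ u ∈ S, ∀ w ∈ T, ¬ F.Ancestor u w ∧ ¬ F.Ancestor w u) :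
    IsIntervalLabeling F d (S ∪ T) (fun w => if w ∈ S then lab₁ w else lab₂ w) x z := by
  have hT : ∀ {w}, w ∈ S ∪ T → w ∉ S → w ∈ T := fun hw h => (mem_union.1 hw).resolve_left h
  refine ⟨h₁.le.trans h₂.le, fun w hw => ?_, fun w hw => ?_, fun w hw => ?_, fun w hw => ?_,
    fun u hu w hw => ?_⟩
  all_goals by_cases hwS : w ∈ S
  all_goals simp only [hwS, if_true, if_false]
  · exact h₁.le_start w hwS
  · exact h₁.le.trans (h₂.le_start w (hT hw hwS))
  · exact (h₁.start_lt w hwS).trans_le h₂.le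
  · exact h₂.start_lt w (hT hw hwS)
  · exact (h₁.end_le w hwS).trans h₂.le
  · exact h₂.end_le w (hT hw hwS)
  · exact h₁.class_le w hwS
  · exact h₂.class_le w (hT hw hwS)
  all_goals by_cases huS : u ∈ S
  all_goals simp only [huS, if_true, if_false]
  · exact h₁.startsInside_iff u huS w hwS
  · have := h₁.start_lt w hwS
    have := h₂.le_start u (hT hu huS)
    simp only [StartsInside, (hST w hwS u (hT hu huS)).2, iff_false]
    omega
  · have := h₁.end_le u huS
    have := h₂.le_start w (hT hw hwS)
    simp only [StartsInside, (hST u huS w (hT hw hwS)).1, iff_false]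
    omega
  · exact h₂.startsInside_iff u (hT hu huS) w (hT hw hwS)

theorem packable_empty {β : ℝ} : Packable F d ∅ β :=
  fun x => ⟨fun _ => (0, 0), x, ⟨le_rfl, by simp, by simp, by simp, by simp, by simp⟩, by simp⟩

theorem Packable.union [DecidableEq V] {S T : Finset V} {β : ℝ} (hS : Packable F d S β)
    (hT : Packable F d T β) (hdisj : Disjoint S T)
    (hST : ∀ u ∈ S, ∀ w ∈ T, ¬ F.Ancestor u w ∧ ¬ F.Ancestor w u) :
    Packable F d (S ∪ T) β := by
  intro x
  obtain ⟨lab₁, y, h₁, hy⟩ := hS x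
  obtain ⟨lab₂, z, h₂, hz⟩ := hT y
  refine ⟨_, z, h₁.piecewise h₂ hST, ?_⟩
  rw [card_union_of_disjoint hdisj]
  push_cast
  linarith

theorem packable_biUnion [DecidableEq V] {T : Finset V} {β : ℝ}
    (hT : ∀ c ∈ T, ∀ c' ∈ T, F.depth c = F.depth c')
    (h : ∀ c ∈ T, Packable F d (F.subtree c) β) : Packable F d (T.biUnion F.subtree) β := by
  induction T using Finset.induction_on with
  | empty => simpa using packable_empty
  | insert c T hc ih =>
    have hne : ∀ c' ∈ T, c ≠ c' := fun c' hc' h => hc (h ▸ hc')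
    have hdepth : ∀ c' ∈ T, F.depth c = F.depth c' :=
      fun c' hc' => hT c (mem_insert_self c T) c' (mem_insert_of_mem hc')
    rw [biUnion_insert]
    refine (h c (mem_insert_self c T)).union
      (ih (fun c hc c' hc' => hT c (mem_insert_of_mem hc) c' (mem_insert_of_mem hc'))
        (fun c hc => h c (mem_insert_of_mem hc)))
      ((disjoint_biUnion_right _ _ _).2 fun c' hc' =>
        disjoint_subtree (hne c' hc') (hdepth c' hc'))
      fun u hu w hw => ?_
    obtain ⟨c', hc', hw⟩ := mem_biUnion.1 hw
    exact ⟨not_ancestor_of_mem_subtree (hne c' hc') (hdepth c' hc') hu hw,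
      not_ancestor_of_mem_subtree (hne c' hc').symm (hdepth c' hc').symm hw hu⟩

theorem IsIntervalLabeling.update [DecidableEq V] {v : V} {lab : V → ℕ × ℕ} {p : ℕ × ℕ}
    {x y : ℕ} (h : IsIntervalLabeling F d (F.descendants v) lab (p.1 + 1) y)
    (hy : y ≤ intervalEnd p) (hx : x ≤ p.1) (hp : p.2 ≤ 4 * d) :
    IsIntervalLabeling F d (F.subtree v) (Function.update lab v p) x (intervalEnd p) := by
  have hv : v ∉ F.descendants v := by simpa using F.ancestor_irrefl v
  have hne : ∀ {w}, w ∈ F.descendants v → w ≠ v := fun hw h => hv (h ▸ hw)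
  have hlt := h.le.trans hy
  refine ⟨by omega, ?_, ?_, ?_, ?_, ?_⟩
  all_goals simp only [subtree, forall_mem_insert]
  · refine ⟨by simpa, fun w hw => ?_⟩
    have := h.le_start w hw
    rw [Function.update_of_ne (hne hw)]
    omega
  · refine ⟨by simp; omega, fun w hw => ?_⟩
    rw [Function.update_of_ne (hne hw)]
    exact (h.start_lt w hw).trans_le hy
  · refine ⟨by simp, fun w hw => ?_⟩
    rw [Function.update_of_ne (hne hw)]
    exact (h.end_le w hw).trans hy
  · refine ⟨by simpa, fun w hw => ?_⟩
    rw [Function.update_of_ne (hne hw)]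
    exact h.class_le w hw
  · refine ⟨⟨?_, fun w hw => ?_⟩, fun u hu => ⟨?_, fun w hw => ?_⟩⟩
    · simpa [StartsInside] using F.ancestor_irrefl v
    · have := h.le_start w hw
      have := h.start_lt w hw
      simp only [Function.update_self, Function.update_of_ne (hne hw), StartsInside,
        mem_descendants.1 hw, iff_true]
      omega
    · have := h.le_start u hu
      have := F.depth_lt_of_ancestor (mem_descendants.1 hu)
      simp only [Function.update_self, Function.update_of_ne (hne hu), StartsInside]
      exact ⟨fun h => by omega, fun huv => by have := F.depth_lt_of_ancestor huv; omega⟩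
    · simpa only [Function.update_of_ne (hne hu), Function.update_of_ne (hne hw)] using
        h.startsInside_iff u hu w hw

theorem Packable.subtree_of_descendants [DecidableEq V] (hd : 0 < d) {v : V} {β : ℝ}
    (hβ : 2 * (d : ℝ) ≤ β) (h : Packable F d (F.descendants v) β) :
    Packable F d (F.subtree v) ((1 + 2 / d) * β) := by
  intro x
  have hd' : (0 : ℝ) < d := by exact_mod_cast hd
  have hβ0 : 0 ≤ β := by linarith
  set s := #(F.descendants v)
  -- the `2d` leaves room for `v` itself and makes the length admissible for `exists_interval_code`
  obtain ⟨p, hxp, hp, hpm, hpd⟩ := exists_interval_code (m := 2 * d + ⌊s * β⌋₊) x hd (by omega)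
  obtain ⟨lab, y, hlab, hy⟩ := h (p.1 + 1)
  have hys : y ≤ p.1 + 1 + ⌊s * β⌋₊ := by
    rw [add_comm _ ⌊_⌋₊, ← Nat.floor_add_natCast (by positivity)]
    exact Nat.le_floor (by push_cast at hy ⊢; linarith)
  refine ⟨_, _, hlab.update (by omega) hxp hp, ?_⟩
  have hm : ((2 * d + ⌊s * β⌋₊ : ℕ) : ℝ) ≤ #(F.subtree v) * β := by
    rw [card_subtree]
    push_cast
    nlinarith [Nat.floor_le (show 0 ≤ s * β by positivity)]
  have hend : (d : ℝ) * intervalEnd p ≤ d * (x + (1 + 2 / d) * (2 * d + ⌊s * β⌋₊ : ℕ)) := by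
    rw [mul_add, ← mul_assoc, mul_add, mul_one, mul_div_cancel₀ _ hd'.ne']
    exact_mod_cast hpd
  calc (intervalEnd p : ℝ) ≤ x + (1 + 2 / d) * (2 * d + ⌊s * β⌋₊ : ℕ) :=
        le_of_mul_le_mul_left hend hd'
    _ ≤ x + #(F.subtree v) * ((1 + 2 / d) * β) := by
        rw [mul_left_comm]
        gcongr

theorem packable_subtree_of_lt_depth_add [DecidableEq V] (hd : 0 < d)
    (hdepth : ∀ w, F.depth w ≤ d) (h : ℕ) (v : V) (hv : d < F.depth v + h) :
    Packable F d (F.subtree v) (2 * d * (1 + 2 / d) ^ h) := by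
  induction h generalizing v with
  | zero => exact absurd (hdepth v) (by omega)
  | succ h ih =>
    have hρ : (1 : ℝ) ≤ 1 + 2 / d := le_add_of_nonneg_right (by positivity)
    rw [show 2 * d * (1 + 2 / (d : ℝ)) ^ (h + 1) = (1 + 2 / d) * (2 * d * (1 + 2 / d) ^ h) by ring]
    refine Packable.subtree_of_descendants hd
      (le_mul_of_one_le_right (by positivity) (one_le_pow₀ hρ)) ?_
    rw [descendants_eq_biUnion_children]
    exact packable_biUnion (fun c hc c' hc' => by rw [depth_child hc, depth_child hc'])
      fun c hc => ih c (by have := depth_child hc; omega)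

theorem packable_univ [DecidableEq V] (hd : 0 < d) (hdepth : ∀ w, F.depth w ≤ d) :
    Packable F d univ (2 * d * (1 + 2 / d) ^ d) := by
  rw [F.univ_eq_biUnion_roots]
  exact packable_biUnion
    (fun r hr r' hr' => by rw [depth_of_mem_roots hr, depth_of_mem_roots hr'])
    fun r hr => packable_subtree_of_lt_depth_add hd hdepth d r
      (by rw [depth_of_mem_roots hr]; omega)

end Packing

theorem one_add_two_div_pow_le_nine (d : ℕ) : (1 + 2 / (d : ℝ)) ^ d ≤ 9 :=
  calc (1 + 2 / (d : ℝ)) ^ d = (1 - (-2) / d) ^ d := by ring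
    _ ≤ Real.exp (- -2) := Real.one_sub_div_pow_le_exp_neg (by linarith [d.cast_nonneg (α := ℝ)])
    _ = Real.exp 1 ^ 2 := by rw [← Real.exp_nat_mul]; norm_num
    _ ≤ 9 := by nlinarith [Real.exp_one_lt_three, Real.exp_pos 1]

def encodeLabel (d : ℕ) (p : ℕ × ℕ) : ℕ := p.2 + (4 * d + 1) * p.1

def decodeLabel (d c : ℕ) : ℕ × ℕ := (c / (4 * d + 1), c % (4 * d + 1))

theorem decodeLabel_encodeLabel {d : ℕ} {p : ℕ × ℕ} (hp : p.2 ≤ 4 * d) :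
    decodeLabel d (encodeLabel d p) = p := by
  have hp' : p.2 < 4 * d + 1 := by omega
  ext
  · simp [decodeLabel, encodeLabel, Nat.add_mul_div_left _ _ (by omega : 0 < 4 * d + 1),
      Nat.div_eq_of_lt hp']
  · simp [decodeLabel, encodeLabel, Nat.mod_eq_of_lt hp']

theorem encodeLabel_lt {d y : ℕ} {p : ℕ × ℕ} (hp : p.2 ≤ 4 * d) (hy : p.1 < y) :
    encodeLabel d p < (4 * d + 1) * y := by
  unfold encodeLabel
  nlinarith

/-- There is an ancestry labeling scheme for the family `F(n,d)` of rooted forests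
with at most `n` nodes and depth at most `d`, with labels drawn from a set of size
`O(n·d²)` (i.e. label size `log₂ n + 2 log₂ d + O(1)` bits): a label set
`{0, …, Usz-1}` and a decoder `D`, independent of the forest, such that every
forest in `F(n,d)` admits a labeling on which `D` answers exactly the
strict-ancestry queries. -/
theorem ancestry_labeling_scheme :
    ∃ C : ℕ, 0 < C ∧ ∀ n d : ℕ, 1 ≤ d →
      ∃ (Usz : ℕ) (D : ℕ → ℕ → Bool), Usz ≤ C * n * d ^ 2 ∧
        ∀ (V : Type) [Fintype V] (F : RootedForest V),
          Fintype.card V ≤ n → (∀ v, F.depth v ≤ d) →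
          ∃ L : V → ℕ, (∀ v, L v < Usz) ∧
            ∀ u v : V, (D (L u) (L v) = true ↔ F.Ancestor u v) := by
  refine ⟨90, by norm_num, fun n d hd => ⟨90 * n * d ^ 2,
    fun c c' => decide (StartsInside (decodeLabel d c) (decodeLabel d c')), le_rfl, ?_⟩⟩
  intro V _ F hn hdepth
  classical
  obtain ⟨lab, y, hlab, hy⟩ := packable_univ hd hdepth 0
  have hyn : y ≤ 18 * n * d := by
    have : (y : ℝ) ≤ n * (2 * d * 9) := by
      rw [Nat.cast_zero, zero_add, card_univ] at hy
      refine hy.trans (mul_le_mul (by exact_mod_cast hn) ?_ (by positivity) (by positivity))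
      gcongr
      exact one_add_two_div_pow_le_nine d
    exact_mod_cast (by linarith : (y : ℝ) ≤ 18 * n * d)
  refine ⟨fun v => encodeLabel d (lab v), fun v => ?_, fun u v => ?_⟩
  · calc encodeLabel d (lab v) < (4 * d + 1) * y :=
          encodeLabel_lt (hlab.class_le v (mem_univ v)) (hlab.start_lt v (mem_univ v))
      _ ≤ 5 * d * (18 * n * d) := Nat.mul_le_mul (by omega) hyn
      _ = 90 * n * d ^ 2 := by ring
  · rw [decide_eq_true_iff, decodeLabel_encodeLabel (hlab.class_le u (mem_univ u)),
      decodeLabel_encodeLabel (hlab.class_le v (mem_univ v))]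
    exact hlab.startsInside_iff u (mem_univ u) v (mem_univ v)
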